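/- arXiv:1312.3993 — 7 statements merged into one kernel-verified Lean document; each statement's English description precedes it below -/
import Mathlib

section
/- For any positive integer r, natural number m, and an indeterminate (or element of a commutative ring) q, the sum over all r-tuples (m_1, ..., m_r) of natural numbers with m_1 + ... + m_r = m of q^{\sum_{j=1}^r (r-j) m_j} equals the Gaussian binomial coefficient \binom{m+r-1}{m}_q. -/
/-!
Splitting off the first entry `a` of an `(r + 1)`-tuple contributes the factor `q ^ (r * a)` and
leaves an `r`-tuple weighted in the same way. Induction on `r` therefore reduces the claim to the
q-hockey-stick identity `∑_{a + b = m} q ^ (r * a) [b + r - 1, b]_q = [m + r, m]_q`, which follows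
by induction on `m` from the second q-Pascal recurrence
`[n + k + 1, k + 1]_q = [n + k, k + 1]_q + q ^ n [n + k, k]_q`.
-/

/-- The Gaussian (q-)binomial coefficient `\binom{n}{k}_q`, defined via the
q-Pascal recurrence `\binom{n+1}{k+1}_q = \binom{n}{k}_q + q^{k+1} \binom{n}{k+1}_q`. -/
def gbinom {R : Type*} [CommRing R] (q : R) : ℕ → ℕ → R
  | 0, 0 => 1
  | 0, _ + 1 => 0
  | _ + 1, 0 => 1
  | n + 1, k + 1 => gbinom q n k + q ^ (k + 1) * gbinom q n (k + 1)

open Finset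

section GaussianBinomial

variable {R : Type*} [CommRing R] (q : R)

theorem gbinom_succ_succ (n k : ℕ) :
    gbinom q (n + 1) (k + 1) = gbinom q n k + q ^ (k + 1) * gbinom q n (k + 1) := rfl

@[simp]
theorem gbinom_zero_right (n : ℕ) : gbinom q n 0 = 1 := by
  cases n <;> rfl

theorem gbinom_eq_zero_of_lt {n k : ℕ} (h : n < k) : gbinom q n k = 0 := by
  induction n generalizing k with
  | zero => obtain ⟨k, rfl⟩ := Nat.exists_eq_add_one_of_ne_zero h.ne'; rfl
  | succ n ih =>
    obtain ⟨k, rfl⟩ := Nat.exists_eq_add_one_of_ne_zero (Nat.ne_zero_of_lt h)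
    rw [gbinom_succ_succ, ih (by omega), ih (by omega), mul_zero, add_zero]

@[simp]
theorem gbinom_self (n : ℕ) : gbinom q n n = 1 := by
  induction n with
  | zero => rfl
  | succ n ih => rw [gbinom_succ_succ, ih, gbinom_eq_zero_of_lt q n.lt_succ_self, mul_zero, add_zero]

theorem gbinom_add_succ_succ (n k : ℕ) :
    gbinom q (n + k + 1) (k + 1) = gbinom q (n + k) (k + 1) + q ^ n * gbinom q (n + k) k := by
  induction n generalizing k with
  | zero => simp [gbinom_eq_zero_of_lt q k.lt_succ_self]
  | succ n ihn =>
    induction k with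
    | zero =>
      have h := ihn 0
      simp only [add_zero, gbinom_zero_right] at h ⊢
      linear_combination gbinom_succ_succ q (n + 1) 0 + q * h - gbinom_succ_succ q n 0 +
        gbinom_zero_right q (n + 1) - gbinom_zero_right q n
    | succ k ihk =>
      have h := ihn (k + 1)
      rw [show n + (k + 1) = n + 1 + k by ring] at h
      rw [← add_assoc]
      linear_combination gbinom_succ_succ q (n + 1 + k + 1) (k + 1) + ihk + q ^ (k + 2) * h -
        gbinom_succ_succ q (n + 1 + k) (k + 1) - q ^ (n + 1) * gbinom_succ_succ q (n + 1 + k) k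

theorem sum_antidiagonal_pow_mul_gbinom (r m : ℕ) :
    ∑ p ∈ antidiagonal m, q ^ (r * p.1) * gbinom q (p.2 + r - 1) p.2 = gbinom q (m + r) m := by
  induction m with
  | zero => simp
  | succ m ih =>
    have shift (p : ℕ × ℕ) : q ^ (r * (p.1 + 1)) * gbinom q (p.2 + r - 1) p.2 =
        q ^ r * (q ^ (r * p.1) * gbinom q (p.2 + r - 1) p.2) := by ring
    rw [Nat.sum_antidiagonal_succ, sum_congr rfl fun p _ ↦ shift p, ← mul_sum, ih,
      show m + 1 + r = r + m + 1 by omega, gbinom_add_succ_succ]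
    simp [add_comm m r]

end GaussianBinomial

theorem sum_antidiagonalTuple_succ {M : Type*} [AddCommMonoid M] (k n : ℕ)
    (f : (Fin (k + 1) → ℕ) → M) :
    ∑ t ∈ Nat.antidiagonalTuple (k + 1) n, f t =
      ∑ p ∈ antidiagonal n, ∑ t ∈ Nat.antidiagonalTuple k p.2, f (Fin.cons p.1 t) := by
  rw [sum_sigma']
  refine sum_nbij' (fun t ↦ ⟨(t 0, ∑ i, Fin.tail t i), Fin.tail t⟩)
    (fun x ↦ Fin.cons x.1.1 x.2) ?_ ?_ ?_ ?_ ?_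
  all_goals simp +contextual [Nat.mem_antidiagonalTuple, Fin.sum_univ_succ, Fin.tail]

theorem sum_rev_mul_cons (r a : ℕ) (t : Fin r → ℕ) :
    ∑ j : Fin (r + 1), (r + 1 - 1 - (j : ℕ)) * (Fin.cons a t : Fin (r + 1) → ℕ) j =
      r * a + ∑ j : Fin r, (r - 1 - (j : ℕ)) * t j := by
  rw [Fin.sum_univ_succ]
  simp only [Fin.cons_zero, Fin.cons_succ, Fin.val_zero, Fin.val_succ]
  congr 1
  refine sum_congr rfl fun j _ ↦ ?_
  congr 1
  omega

theorem sum_tuples_eq_gbinom_general {R : Type*} [CommRing R] (q : R) (r : ℕ) (m : ℕ) :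
    ∑ t ∈ Finset.Nat.antidiagonalTuple r m,
        q ^ (∑ j : Fin r, (r - 1 - (j : ℕ)) * t j) =
      gbinom q (m + r - 1) m := by
  induction r generalizing m with
  | zero =>
    cases m with
    | zero => simp
    | succ m => simp [gbinom_eq_zero_of_lt]
  | succ r ih =>
    simp_rw [sum_antidiagonalTuple_succ, sum_rev_mul_cons, pow_add, ← mul_sum, ih,
      sum_antidiagonal_pow_mul_gbinom]
    rw [← add_assoc, Nat.add_sub_cancel]

theorem sum_tuples_eq_gbinom {R : Type*} [CommRing R] (q : R) (r : ℕ) (hr : 0 < r) (m : ℕ) :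
    ∑ t ∈ Finset.Nat.antidiagonalTuple r m,
        q ^ (∑ j : Fin r, (r - 1 - (j : ℕ)) * t j) =
      gbinom q (m + r - 1) m :=
  sum_tuples_eq_gbinom_general q r m
end

section
/- Define E_{n,q}^{(h,r)}(x) := \frac{(1+q)^r}{(1-q)^n} \sum_{l=0}^n \binom{n}{l} \frac{(-q^x)^l}{\prod_{j=0}^{r-1}(1+q^{h-r+l+1+j})}. Then for all real x, y and all n ≥ 0, E_{n,q}^{(h,r)}(x+y) = \sum_{i=0}^{n} \binom{n}{i} q^{i x} E_{i,q}^{(h,r)}(y) [x]_q^{n-i}. -/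
noncomputable def qnum (q x : ℝ) : ℝ := (1 - q ^ x) / (1 - q)

/-- The (h,q)-extension of higher-order Euler polynomials, by the finite closed formula. -/
noncomputable def qE (q : ℝ) (h : ℤ) (r n : ℕ) (x : ℝ) : ℝ :=
  (1 + q) ^ r / (1 - q) ^ n *
    ∑ l ∈ Finset.range (n + 1), (n.choose l : ℝ) * (-(q ^ x)) ^ l /
      ∏ j ∈ Finset.range r, (1 + q ^ (h - r + l + 1 + j))

/-! Let `L` be the linear functional on `R[X]` with `L (X ^ l) = c l` (umbral evaluation). It turns
the binomial transform `B_n(u) = ∑ C(n,l) u^l c_l` into `L ((1 + u X) ^ n)`. Expanding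
`(1 + t u X) ^ n = (t (1 + u X) + (1 - t)) ^ n` by the binomial theorem and applying `L` gives
`B_n(t u) = ∑ C(n,i) t^i B_i(u) (1 - t)^(n-i)`. The theorem is the case `t = q^x`, `u = -q^y`,
`c_l = 1 / ∏_j (1 + q^(h-r+l+1+j))`, after splitting `(1-q)^n = (1-q)^i (1-q)^(n-i)`. -/

open Polynomial

section BinomialTransform

variable {R : Type*} [CommRing R]

def binomialTransform (c : ℕ → R) (n : ℕ) (u : R) : R :=
  ∑ l ∈ Finset.range (n + 1), (n.choose l : R) * u ^ l * c l

def umbralEval (c : ℕ → R) : R[X] →ₗ[R] R :=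
  lsum fun l => LinearMap.mulRight R (c l)

lemma umbralEval_C_mul_X_pow (c : ℕ → R) (a : R) (l : ℕ) :
    umbralEval c (C a * X ^ l) = a * c l := by
  simp [umbralEval, C_mul_X_pow_eq_monomial]

lemma umbralEval_one_add_C_mul_X_pow (c : ℕ → R) (n : ℕ) (u : R) :
    umbralEval c ((1 + C u * X) ^ n) = binomialTransform c n u := by
  rw [add_comm, add_pow, map_sum]
  refine Finset.sum_congr rfl fun l _ => ?_
  have hterm : (C u * X) ^ l * 1 ^ (n - l) * (n.choose l : R[X]) =
      C ((n.choose l : R) * u ^ l) * X ^ l := by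
    simp only [C_mul, C_pow, C_eq_natCast]; ring
  rw [hterm, umbralEval_C_mul_X_pow]

theorem binomialTransform_mul (c : ℕ → R) (n : ℕ) (t u : R) :
    binomialTransform c n (t * u) =
      ∑ i ∈ Finset.range (n + 1),
        (n.choose i : R) * t ^ i * binomialTransform c i u * (1 - t) ^ (n - i) := by
  have hsplit : 1 + C (t * u) * X = C t * (1 + C u * X) + C (1 - t) := by
    simp only [C_mul, C_sub, C_1]; ring
  rw [← umbralEval_one_add_C_mul_X_pow, hsplit, add_pow, map_sum]
  refine Finset.sum_congr rfl fun i _ => ?_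
  have hterm : (C t * (1 + C u * X)) ^ i * C (1 - t) ^ (n - i) * (n.choose i : R[X]) =
      C ((n.choose i : R) * t ^ i * (1 - t) ^ (n - i)) * (1 + C u * X) ^ i := by
    simp only [mul_pow, C_mul, C_pow, C_eq_natCast]; ring
  rw [hterm, C_mul', map_smul, umbralEval_one_add_C_mul_X_pow, smul_eq_mul]
  ring

end BinomialTransform

lemma qE_eq_binomialTransform (q : ℝ) (h : ℤ) (r n : ℕ) (x : ℝ) :
    qE q h r n x = (1 + q) ^ r / (1 - q) ^ n *
      binomialTransform (fun l : ℕ => (∏ j ∈ Finset.range r, (1 + q ^ (h - r + l + 1 + j)))⁻¹)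
        n (-(q ^ x)) := by
  simp only [qE, binomialTransform, div_eq_mul_inv]

theorem qE_add_general (q : ℝ) (hq0 : 0 < q) (h : ℤ) (r : ℕ)
    (n : ℕ) (x y : ℝ) :
    qE q h r n (x + y) =
      ∑ i ∈ Finset.range (n + 1),
        (n.choose i : ℝ) * q ^ ((i : ℝ) * x) * qE q h r i y * (qnum q x) ^ (n - i) := by
  have hneg : -(q ^ (x + y)) = q ^ x * -(q ^ y) := by rw [Real.rpow_add hq0]; ring
  rw [qE_eq_binomialTransform, hneg, binomialTransform_mul, Finset.mul_sum]
  refine Finset.sum_congr rfl fun i hi => ?_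
  have hsplit : (1 - q) ^ n = (1 - q) ^ i * (1 - q) ^ (n - i) := by
    rw [← pow_add, Nat.add_sub_cancel' (Finset.mem_range_succ_iff.mp hi)]
  rw [qE_eq_binomialTransform, qnum, div_pow, mul_comm (i : ℝ), Real.rpow_mul_natCast hq0.le,
    hsplit]
  ring

theorem qE_add (q : ℝ) (hq0 : 0 < q) (hq1 : q < 1) (h : ℤ) (r : ℕ) (hr : 0 < r)
    (n : ℕ) (x y : ℝ) :
    qE q h r n (x + y) =
      ∑ i ∈ Finset.range (n + 1),
        (n.choose i : ℝ) * q ^ ((i : ℝ) * x) * qE q h r i y * (qnum q x) ^ (n - i) :=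
  qE_add_general q hq0 h r n x y
end

section
/- With E_{n,q}^{(h,r)}(x) defined by the closed formula, for all real x and n ≥ 0, E_{n,q}^{(h,r)}(x) = \sum_{l=0}^n \binom{n}{l} q^{l x} E_{l,q}^{(h,r)}(0) [x]_q^{n-l}. -/
/-!
With `a = q^x` and `c_k = (-1)^k / ∏_j (1 + q^(h-r+k+1+j))`, the closed formula is
`E_n(x) = (1+q)^r (1-q)^(-n) ∑_k C(n,k) a^k c_k`, while `E_l(0)` is, up to the same kind of
factor, the binomial transform `∑_{k ≤ l} C(l,k) c_k`. Averaging binomial transforms against the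
Bernstein weights `C(n,l) a^l (1-a)^(n-l)` returns `∑_k C(n,k) a^k c_k`, because
`∑_l C(n,l) C(l,k) a^l b^(n-l) = C(n,k) a^k (a+b)^(n-k)` and `a + (1 - a) = 1`.
-/

open Finset

section Binomial

variable {R : Type*} [CommSemiring R]

theorem sum_range_choose_mul_eq_of_le {l n : ℕ} (hln : l ≤ n) (f : ℕ → R) :
    ∑ k ∈ range (l + 1), (l.choose k : R) * f k = ∑ k ∈ range (n + 1), (l.choose k : R) * f k := by
  refine sum_subset (range_subset_range.mpr (by omega)) fun k _ hk => ?_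
  rw [Nat.choose_eq_zero_of_lt (by simpa using hk), Nat.cast_zero, zero_mul]

theorem sum_choose_mul_choose_mul_pow_mul_pow (a b : R) (n k : ℕ) :
    ∑ l ∈ range (n + 1), (n.choose l : R) * l.choose k * a ^ l * b ^ (n - l) =
      n.choose k * a ^ k * (a + b) ^ (n - k) := by
  rcases lt_or_ge n k with hnk | hkn
  · rw [Nat.choose_eq_zero_of_lt hnk, Nat.cast_zero, zero_mul, zero_mul]
    refine sum_eq_zero fun l hl => ?_
    rw [Nat.choose_eq_zero_of_lt (n := l) (by simp at hl; omega), Nat.cast_zero, mul_zero,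
      zero_mul, zero_mul]
  rw [range_eq_Ico, ← sum_Ico_consecutive _ (Nat.zero_le k) (by omega : k ≤ n + 1),
    sum_eq_zero fun l hl => by rw [Nat.choose_eq_zero_of_lt (mem_Ico.mp hl).2]; simp,
    zero_add, sum_Ico_eq_sum_range, show n + 1 - k = n - k + 1 by omega, add_pow, mul_sum]
  refine sum_congr rfl fun m _ => ?_
  have hchoose : (n.choose (k + m) : R) * (k + m).choose k = n.choose k * (n - k).choose m := by
    rw [← Nat.cast_mul, ← Nat.cast_mul, Nat.choose_mul (Nat.le_add_right k m),
      Nat.add_sub_cancel_left]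
  rw [show n - (k + m) = n - k - m by omega, hchoose]
  ring

end Binomial

theorem sum_bernstein_mul_binomialTransform {R : Type*} [CommRing R] (a : R) (n : ℕ)
    (c : ℕ → R) :
    ∑ l ∈ range (n + 1), (n.choose l : R) * a ^ l * (1 - a) ^ (n - l) *
        ∑ k ∈ range (l + 1), (l.choose k : R) * c k =
      ∑ k ∈ range (n + 1), (n.choose k : R) * a ^ k * c k := by
  calc _ = ∑ l ∈ range (n + 1), ∑ k ∈ range (n + 1),
          (n.choose l : R) * l.choose k * a ^ l * (1 - a) ^ (n - l) * c k := by
        refine sum_congr rfl fun l hl => ?_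
        rw [sum_range_choose_mul_eq_of_le (by simpa [Nat.lt_succ_iff] using hl), mul_sum]
        exact sum_congr rfl fun k _ => by ring
    _ = ∑ k ∈ range (n + 1), (n.choose k : R) * a ^ k * (a + (1 - a)) ^ (n - k) * c k := by
        rw [sum_comm]
        simp only [← sum_mul, sum_choose_mul_choose_mul_pow_mul_pow]
    _ = _ := by simp

noncomputable def qECoeff (q : ℝ) (h : ℤ) (r k : ℕ) : ℝ :=
  (-1) ^ k / ∏ j ∈ range r, (1 + q ^ (h - r + k + 1 + j))

theorem qE_eq_sum_qECoeff (q : ℝ) (h : ℤ) (r n : ℕ) (x : ℝ) :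
    qE q h r n x = (1 + q) ^ r / (1 - q) ^ n *
      ∑ k ∈ range (n + 1), (n.choose k : ℝ) * (q ^ x) ^ k * qECoeff q h r k := by
  unfold qE qECoeff
  congr 1
  exact sum_congr rfl fun k _ => by rw [neg_pow]; ring

theorem qE_zero_eq_sum_qECoeff (q : ℝ) (h : ℤ) (r l : ℕ) :
    qE q h r l 0 = (1 + q) ^ r / (1 - q) ^ l *
      ∑ k ∈ range (l + 1), (l.choose k : ℝ) * qECoeff q h r k := by
  simp [qE_eq_sum_qECoeff]

theorem qE_eq_sum_qE_zero_general (q : ℝ) (hq0 : 0 < q) (h : ℤ) (r : ℕ)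
    (n : ℕ) (x : ℝ) :
    qE q h r n x =
      ∑ l ∈ Finset.range (n + 1),
        (n.choose l : ℝ) * q ^ ((l : ℝ) * x) * qE q h r l 0 * (qnum q x) ^ (n - l) := by
  rw [qE_eq_sum_qECoeff, ← sum_bernstein_mul_binomialTransform, mul_sum]
  refine sum_congr rfl fun l hl => ?_
  have hln : n = l + (n - l) := by simp at hl; omega
  rw [qE_zero_eq_sum_qECoeff, mul_comm (l : ℝ), Real.rpow_mul hq0.le, Real.rpow_natCast, qnum,
    div_pow, hln, pow_add, Nat.add_sub_cancel_left]
  ring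

theorem qE_eq_sum_qE_zero (q : ℝ) (hq0 : 0 < q) (hq1 : q < 1) (h : ℤ) (r : ℕ) (hr : 0 < r)
    (n : ℕ) (x : ℝ) :
    qE q h r n x =
      ∑ l ∈ Finset.range (n + 1),
        (n.choose l : ℝ) * q ^ ((l : ℝ) * x) * qE q h r l 0 * (qnum q x) ^ (n - l) :=
  qE_eq_sum_qE_zero_general q hq0 h r n x
end

section
/- (Symmetry identity, Theorem 2.2) Let a, b be odd positive integers, h ∈ ℤ, r ≥ 1, n ≥ 0, and x real. Then [2]_{q^b}^r [a]_q^n \sum_{j_1,...,j_r=0}^{a-1} (-1)^{j_1+...+j_r} q^{b \sum_{l=1}^r (h-l+1) j_l} E_{n,q^a}^{(h,r)}\left(bx + \frac{b(j_1+...+j_r)}{a}\right) = [2]_{q^a}^r [b]_q^n \sum_{j_1,...,j_r=0}^{b-1} (-1)^{j_1+...+j_r} q^{a \sum_{l=1}^r (h-l+1) j_l} E_{n,q^b}^{(h,r)}\left(ax + \frac{a(j_1+...+j_r)}{b}\right). -/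
/-- The q-number of a natural number: `[a]_q = (1-q^a)/(1-q)`. -/
noncomputable def qnat (q : ℝ) (a : ℕ) : ℝ := (1 - q ^ a) / (1 - q)

/-!
In the closed formula for `qE (q^a)` at `b x + b J / a`, the power `(q^a)^(b x + b J / a)`
factors as `q^(a b x) (q^b)^J`. After exchanging the sums, the weighted sum over
`j ∈ {0,…,a-1}^r` contributes, for each `l`, a product of `r` alternating geometric sums in
`-q^(b (h + l - k))`. Because `a` is odd, each equals
`(1 + q^(a b (h + l - k))) / (1 + q^(b (h + l - k)))`, and the prefactor `(1 + q^b)^r [a]_q^n`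
absorbs the `(1 + q^a)^r / (1 - q^a)^n` of `qE (q^a)`. What remains is symmetric in `a` and `b`.
-/
open Finset

section Field

variable {K : Type*} [Field K]

theorem zpow_sum₀ {ι : Type*} {q : K} (hq : q ≠ 0) (s : Finset ι) (f : ι → ℤ) :
    q ^ (∑ i ∈ s, f i) = ∏ i ∈ s, q ^ f i := by
  classical
  induction s using Finset.induction with
  | empty => simp
  | insert i s hi ih => rw [sum_insert hi, prod_insert hi, zpow_add₀ hq, ih]

theorem Odd.geom_sum_neg {a : ℕ} (ha : Odd a) {t : K} (ht : 1 + t ≠ 0) :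
    ∑ c ∈ range a, (-t) ^ c = (1 + t ^ a) / (1 + t) := by
  have hne : -t - 1 ≠ 0 := fun h => ht (by linear_combination -h)
  rw [geom_sum_eq (sub_ne_zero.mp hne), ha.neg_pow]
  field_simp
  ring

theorem sum_pi_prod_neg_pow_of_odd {ι : Type*} [Fintype ι] [DecidableEq ι] {a : ℕ} (ha : Odd a)
    (t : ι → K) (ht : ∀ i, 1 + t i ≠ 0) :
    ∑ j : ι → Fin a, ∏ i, (-t i) ^ (j i : ℕ) = ∏ i, (1 + t i ^ a) / (1 + t i) := by
  rw [← Fintype.prod_sum fun i (c : Fin a) => (-t i) ^ (c : ℕ)]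
  refine prod_congr rfl fun i _ => ?_
  rw [Fin.sum_univ_eq_sum_range (fun c => (-t i) ^ c), ha.geom_sum_neg (ht i)]

theorem neg_one_pow_mul_zpow_mul_pow_eq_prod {ι : Type*} [Fintype ι] {q : K} (hq : q ≠ 0)
    (b l : ℕ) (e : ι → ℤ) (j : ι → ℕ) :
    (-1) ^ (∑ i, j i) * q ^ ((b : ℤ) * ∑ i, e i * j i) * ((q ^ b) ^ (∑ i, j i)) ^ l =
      ∏ i, (-q ^ ((b : ℤ) * (e i + l))) ^ j i := by
  have hterm : ∀ i, (-q ^ ((b : ℤ) * (e i + l))) ^ j i =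
      (-1) ^ j i * q ^ ((b : ℤ) * (e i + l) * j i) := fun i => by
    rw [neg_pow, ← zpow_natCast (q ^ _), ← zpow_mul]
  have hpow : ((q ^ b) ^ (∑ i, j i)) ^ l = q ^ ((b : ℤ) * ∑ i, (l : ℤ) * j i) := by
    rw [← pow_mul, ← pow_mul, ← zpow_natCast, ← mul_sum]
    push_cast
    ring_nf
  rw [prod_congr rfl fun i _ => hterm i, prod_mul_distrib, prod_pow_eq_pow_sum, ← zpow_sum₀ hq,
    hpow, mul_assoc, ← zpow_add₀ hq, ← mul_add, ← sum_add_distrib, mul_sum]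
  congr 2
  refine sum_congr rfl fun i _ => ?_
  ring

end Field

theorem Finset.prod_range_sub_natCast_reflect {M : Type*} [CommMonoid M] (f : ℤ → M) (c : ℤ)
    (r : ℕ) : ∏ k ∈ range r, f (c - r + 1 + k) = ∏ k ∈ range r, f (c - k) := by
  rw [← prod_range_reflect]
  refine prod_congr rfl fun k hk => ?_
  have := mem_range.mp hk
  congr 1
  omega

theorem qE_pow_apply {q : ℝ} (hq : 0 < q) (h : ℤ) (r n : ℕ) {a : ℕ} (ha : a ≠ 0) (b J : ℕ)
    (x : ℝ) :
    qE (q ^ a) h r n (b * x + b * J / a) =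
      (1 + q ^ a) ^ r / (1 - q ^ a) ^ n *
        ∑ l ∈ range (n + 1), n.choose l * (-q ^ (a * b * x)) ^ l * ((q ^ b) ^ J) ^ l /
          ∏ k ∈ range r, (1 + q ^ ((a : ℤ) * (h + l - k))) := by
  have hbase : (q ^ a) ^ (b * x + b * J / a) = q ^ (a * b * x) * (q ^ b) ^ J := by
    have hexp : (a : ℝ) * (b * x + b * J / a) = a * b * x + (b * J : ℕ) := by
      push_cast
      field_simp
    rw [← Real.rpow_natCast q a, ← Real.rpow_mul hq.le, hexp, Real.rpow_add hq, Real.rpow_natCast,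
      pow_mul]
  unfold qE
  congr 1
  refine sum_congr rfl fun l _ => ?_
  rw [hbase, neg_mul_eq_neg_mul, mul_pow, ← mul_assoc,
    ← prod_range_sub_natCast_reflect (fun m => 1 + q ^ ((a : ℤ) * m))]
  congr 1
  refine prod_congr rfl fun k _ => ?_
  rw [← zpow_natCast, ← zpow_mul]
  ring_nf

theorem sum_mul_qE_pow_apply {ι : Type*} [Fintype ι] {q : ℝ} (hq : 0 < q) (h : ℤ) (r n : ℕ)
    {a : ℕ} (ha : a ≠ 0) (b : ℕ) (x : ℝ) (w : ι → ℝ) (J : ι → ℕ) :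
    ∑ j, w j * qE (q ^ a) h r n (b * x + b * (J j : ℕ) / a) =
      (1 + q ^ a) ^ r / (1 - q ^ a) ^ n *
        ∑ l ∈ range (n + 1), n.choose l * (-q ^ (a * b * x)) ^ l /
          (∏ k ∈ range r, (1 + q ^ ((a : ℤ) * (h + l - k)))) * ∑ j, w j * ((q ^ b) ^ J j) ^ l := by
  simp_rw [qE_pow_apply hq h r n ha, mul_sum]
  rw [sum_comm]
  refine sum_congr rfl fun l _ => sum_congr rfl fun j _ => ?_
  ring

theorem sum_neg_one_pow_weight_eq_prod {q : ℝ} (hq : 0 < q) (r : ℕ) (h : ℤ) {a : ℕ}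
    (ha : Odd a) (b l : ℕ) :
    ∑ j : Fin r → Fin a, (-1 : ℝ) ^ (∑ i, (j i : ℕ)) *
        q ^ ((b : ℤ) * ∑ i : Fin r, (h - (i : ℕ)) * (j i : ℤ)) * ((q ^ b) ^ (∑ i, (j i : ℕ))) ^ l =
      ∏ k ∈ range r, (1 + q ^ ((a * b : ℤ) * (h + l - k))) / (1 + q ^ ((b : ℤ) * (h + l - k))) := by
  calc _ = ∑ j : Fin r → Fin a, ∏ i : Fin r, (-q ^ ((b : ℤ) * (h - (i : ℕ) + l))) ^ (j i : ℕ) :=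
        sum_congr rfl fun j _ =>
          neg_one_pow_mul_zpow_mul_pow_eq_prod hq.ne' b l (fun i : Fin r => h - (i : ℕ)) fun i => j i
    _ = ∏ i : Fin r, (1 + (q ^ ((b : ℤ) * (h - (i : ℕ) + l))) ^ a) /
          (1 + q ^ ((b : ℤ) * (h - (i : ℕ) + l))) :=
        sum_pi_prod_neg_pow_of_odd ha _ fun i => by positivity
    _ = _ := by
      rw [Fin.prod_univ_eq_prod_range
        (fun k => (1 + (q ^ ((b : ℤ) * (h - k + l))) ^ a) / (1 + q ^ ((b : ℤ) * (h - k + l))))]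
      refine prod_congr rfl fun k _ => ?_
      rw [← zpow_natCast, ← zpow_mul]
      ring_nf

noncomputable def qESymmetricForm (q : ℝ) (h : ℤ) (r n : ℕ) (x : ℝ) (a b : ℕ) : ℝ :=
  (1 + q ^ a) ^ r * (1 + q ^ b) ^ r / (1 - q) ^ n *
    ∑ l ∈ range (n + 1), n.choose l * (-q ^ (a * b * x)) ^ l *
      ∏ k ∈ range r, (1 + q ^ ((a * b : ℤ) * (h + l - k))) /
        ((1 + q ^ ((a : ℤ) * (h + l - k))) * (1 + q ^ ((b : ℤ) * (h + l - k))))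

theorem qESymmetricForm_comm (q : ℝ) (h : ℤ) (r n : ℕ) (x : ℝ) (a b : ℕ) :
    qESymmetricForm q h r n x a b = qESymmetricForm q h r n x b a := by
  unfold qESymmetricForm
  rw [mul_comm ((1 + q ^ a) ^ r), mul_comm (a : ℝ), mul_comm (a : ℤ) b]
  congr 1
  refine sum_congr rfl fun l _ => ?_
  congr 1
  exact prod_congr rfl fun k _ => by rw [mul_comm (1 + q ^ ((a : ℤ) * _))]

theorem weighted_sum_qE_eq_qESymmetricForm {q : ℝ} (hq0 : 0 < q) (hq1 : q ≠ 1) (r : ℕ) (h : ℤ)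
    (n : ℕ) (x : ℝ) {a : ℕ} (ha : Odd a) (b : ℕ) :
    (1 + q ^ b) ^ r * (qnat q a) ^ n *
        ∑ j : Fin r → Fin a,
          (-1 : ℝ) ^ (∑ l, (j l : ℕ)) *
            q ^ ((b : ℤ) * ∑ l : Fin r, (h - (l : ℕ)) * (j l : ℤ)) *
            qE (q ^ a) h r n ((b : ℝ) * x + (b : ℝ) * (∑ l, (j l : ℕ) : ℕ) / a) =
      qESymmetricForm q h r n x a b := by
  have hqa : 1 - q ^ a ≠ 0 :=
    sub_ne_zero.mpr (Ne.symm ((pow_eq_one_iff_of_nonneg hq0.le ha.pos.ne').not.mpr hq1))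
  have hconst : (1 + q ^ b) ^ r * qnat q a ^ n * ((1 + q ^ a) ^ r / (1 - q ^ a) ^ n) =
      (1 + q ^ a) ^ r * (1 + q ^ b) ^ r / (1 - q) ^ n := by
    rw [qnat, div_pow]
    field_simp
  rw [sum_mul_qE_pow_apply hq0 h r n ha.pos.ne', ← mul_assoc, hconst, qESymmetricForm]
  congr 1
  refine sum_congr rfl fun l _ => ?_
  rw [sum_neg_one_pow_weight_eq_prod hq0 r h ha]
  simp only [prod_div_distrib, prod_mul_distrib]
  ring

theorem qE_symmetry_general (q : ℝ) (hq0 : 0 < q) (hq1 : q < 1) (r : ℕ)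
    (h : ℤ) (n : ℕ) (x : ℝ)
    (a b : ℕ) (haodd : Odd a) (hbodd : Odd b) :
    (1 + q ^ b) ^ r * (qnat q a) ^ n *
        ∑ j : Fin r → Fin a,
          (-1 : ℝ) ^ (∑ l, (j l : ℕ)) *
            q ^ ((b : ℤ) * ∑ l : Fin r, (h - (l : ℕ)) * (j l : ℤ)) *
            qE (q ^ a) h r n ((b : ℝ) * x + (b : ℝ) * (∑ l, (j l : ℕ) : ℕ) / a) =
      (1 + q ^ a) ^ r * (qnat q b) ^ n *
        ∑ j : Fin r → Fin b,
          (-1 : ℝ) ^ (∑ l, (j l : ℕ)) *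
            q ^ ((a : ℤ) * ∑ l : Fin r, (h - (l : ℕ)) * (j l : ℤ)) *
            qE (q ^ b) h r n ((a : ℝ) * x + (a : ℝ) * (∑ l, (j l : ℕ) : ℕ) / b) := by
  rw [weighted_sum_qE_eq_qESymmetricForm hq0 hq1.ne r h n x haodd b,
    weighted_sum_qE_eq_qESymmetricForm hq0 hq1.ne r h n x hbodd a, qESymmetricForm_comm]

theorem qE_symmetry (q : ℝ) (hq0 : 0 < q) (hq1 : q < 1) (r : ℕ) (hr : 0 < r)
    (h : ℤ) (hhr : (r : ℤ) ≤ h) (n : ℕ) (x : ℝ)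
    (a b : ℕ) (ha : 0 < a) (hb : 0 < b) (haodd : Odd a) (hbodd : Odd b) :
    (1 + q ^ b) ^ r * (qnat q a) ^ n *
        ∑ j : Fin r → Fin a,
          (-1 : ℝ) ^ (∑ l, (j l : ℕ)) *
            q ^ ((b : ℤ) * ∑ l : Fin r, (h - (l : ℕ)) * (j l : ℤ)) *
            qE (q ^ a) h r n ((b : ℝ) * x + (b : ℝ) * (∑ l, (j l : ℕ) : ℕ) / a) =
      (1 + q ^ a) ^ r * (qnat q b) ^ n *
        ∑ j : Fin r → Fin b,
          (-1 : ℝ) ^ (∑ l, (j l : ℕ)) *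
            q ^ ((a : ℤ) * ∑ l : Fin r, (h - (l : ℕ)) * (j l : ℤ)) *
            qE (q ^ b) h r n ((a : ℝ) * x + (a : ℝ) * (∑ l, (j l : ℕ) : ℕ) / b) :=
  qE_symmetry_general q hq0 hq1 r h n x a b haodd hbodd
end

section
/- (Theorem 2.4) Let a, b be odd positive integers, h ∈ ℤ, r ≥ 1, n ≥ 0, x real. With S_{n,i,q}^{(h,r)}(a) = \sum_{j_1,...,j_r=0}^{a-1} (-1)^{j_1+...+j_r} q^{\sum_{l=1}^r (h+n-l-i+1) j_l} [j_1+...+j_r]_q^i, one has [2]_{q^b}^r \sum_{i=0}^n \binom{n}{i} [a]_q^{n-i} [b]_q^i E_{n-i,q^a}^{(h,r)}(bx) S_{n,i,q^b}^{(h,r)}(a) = [2]_{q^a}^r \sum_{i=0}^n \binom{n}{i} [b]_q^{n-i} [a]_q^i E_{n-i,q^b}^{(h,r)}(ax) S_{n,i,q^a}^{(h,r)}(b). -/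
/-- `S_{n,i,q}^{(h,r)}(a) = ∑_{j_1,…,j_r=0}^{a-1} (-1)^{j_1+⋯+j_r}
q^{∑_{l=1}^r (h+n-l-i+1) j_l} [j_1+⋯+j_r]_q^i`. -/
noncomputable def qS (q : ℝ) (h : ℤ) (r n i a : ℕ) : ℝ :=
  ∑ j : Fin r → Fin a,
    (-1 : ℝ) ^ (∑ l, (j l : ℕ)) *
      q ^ (∑ l : Fin r, (h + n - (l : ℕ) - i) * (j l : ℤ)) *
      (qnat q (∑ l, (j l : ℕ))) ^ i

/-!
Multiplying by `(1 - q)^n` turns `[a]_q^(n-i) [b]_q^i` into `(1 - q^a)^(n-i) (1 - q^b)^i`, which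
cancels the denominators in the closed formulas for `E` and `S`. After expanding, the sum over `i`
collapses by the binomial theorem (via `C(n,i) C(n-i,l) = C(n,l) C(n-l,i)`), and the remaining sum
over `j ∈ {0,…,a-1}^r` factors into geometric sums in `-q^(b(h+l-l'))`, which for odd `a` equal
`(1 + q^(ab(h+l-l'))) / (1 + q^(b(h+l-l')))`. So `(1 - q)^n` times either side is
`(1+q^a)^r (1+q^b)^r ∑_l C(n,l) (-q^(abx))^l D(q^(ab), l) / (D(q^a, l) D(q^b, l))`,
with `D = eulerDenom` the denominator of `E`, and this is symmetric in `a` and `b`.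
-/

open Finset

theorem one_sub_mul_qnat {q : ℝ} (hq : q ≠ 1) (m : ℕ) : (1 - q) * qnat q m = 1 - q ^ m :=
  mul_div_cancel₀ _ (sub_ne_zero.2 hq.symm)

theorem choose_mul_choose_sub_comm (n i l : ℕ) :
    n.choose i * (n - i).choose l = n.choose l * (n - l).choose i := by
  have h1 := Nat.choose_mul (n := n) (Nat.le_add_right i l)
  have h2 := Nat.choose_mul (n := n) (Nat.le_add_left l i)
  simp only [Nat.add_sub_cancel_left, Nat.add_sub_cancel] at h1 h2
  rw [← h1, ← h2, Nat.choose_symm_add]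

theorem sum_range_choose_mul_of_le {R : Type*} [CommSemiring R] (f : ℕ → R) {m N : ℕ}
    (hmN : m ≤ N) :
    ∑ i ∈ range (m + 1), (m.choose i : R) * f i =
      ∑ i ∈ range (N + 1), (m.choose i : R) * f i := by
  refine sum_subset (range_subset_range.2 (by omega)) fun i _ hi => ?_
  rw [Nat.choose_eq_zero_of_lt (by simpa using hi), Nat.cast_zero, zero_mul]

theorem sum_range_choose_mul_sum_range_choose_mul_pow {R : Type*} [CommSemiring R] (n : ℕ)
    (c : ℕ → R) (t : R) :
    ∑ i ∈ range (n + 1),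
        (n.choose i : R) * (∑ l ∈ range (n - i + 1), ((n - i).choose l : R) * c l) * t ^ i =
      ∑ l ∈ range (n + 1), (n.choose l : R) * c l * (1 + t) ^ (n - l) :=
  calc _ = ∑ i ∈ range (n + 1), ∑ l ∈ range (n + 1),
        (n.choose l : R) * c l * ((n - l).choose i * t ^ i) := by
        refine sum_congr rfl fun i _ => ?_
        rw [sum_range_choose_mul_of_le _ (Nat.sub_le n i), mul_sum, sum_mul]
        refine sum_congr rfl fun l _ => ?_
        have := congrArg (Nat.cast (R := R)) (choose_mul_choose_sub_comm n i l)
        push_cast at this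
        calc _ = (n.choose i * (n - i).choose l : R) * (c l * t ^ i) := by ring
          _ = _ := by rw [this]; ring
    _ = ∑ l ∈ range (n + 1),
        (n.choose l : R) * c l * ∑ i ∈ range (n + 1), (n - l).choose i * t ^ i := by
        rw [sum_comm]; simp only [mul_sum]
    _ = _ := by
        refine sum_congr rfl fun l _ => ?_
        rw [← sum_range_choose_mul_of_le _ (Nat.sub_le n l), add_comm 1 t, add_pow]
        simp only [one_pow, mul_one, mul_comm]

theorem geom_sum_neg_of_odd {K : Type*} [Field K] {t : K} (ht : 1 + t ≠ 0) {a : ℕ}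
    (ha : Odd a) :
    ∑ v ∈ range a, (-t) ^ v = (1 + t ^ a) / (1 + t) := by
  have := mul_neg_geom_sum (-t) a
  rw [ha.neg_pow] at this
  rw [eq_div_iff ht]
  linear_combination this

theorem zpow_sum_of_ne_zero {G₀ ι : Type*} [CommGroupWithZero G₀] {a : G₀} (ha : a ≠ 0)
    (s : Finset ι) (f : ι → ℤ) : a ^ (∑ i ∈ s, f i) = ∏ i ∈ s, a ^ f i := by
  classical
  induction s using Finset.induction_on with
  | empty => simp
  | insert i s hi ih => rw [sum_insert hi, prod_insert hi, zpow_add₀ ha, ih]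

noncomputable def eulerDenom (Q : ℝ) (h : ℤ) (r l : ℕ) : ℝ :=
  ∏ j ∈ range r, (1 + Q ^ (h - r + l + 1 + j))

theorem eulerDenom_eq_prod_fin (Q : ℝ) (h : ℤ) (r k : ℕ) :
    eulerDenom Q h r k = ∏ l : Fin r, (1 + Q ^ (h + k - (l : ℕ) : ℤ)) := by
  rw [eulerDenom, Fin.prod_univ_eq_prod_range (fun l => 1 + Q ^ (h + k - l : ℤ)),
    ← prod_range_reflect]
  refine prod_congr rfl fun j hj => ?_
  have := mem_range.1 hj
  congr 2
  omega

theorem one_sub_pow_mul_qE {Q : ℝ} (hQ : Q ≠ 1) (h : ℤ) (r m : ℕ) (y : ℝ) :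
    (1 - Q) ^ m * qE Q h r m y =
      (1 + Q) ^ r *
        ∑ l ∈ range (m + 1), (m.choose l : ℝ) * ((-(Q ^ y)) ^ l / eulerDenom Q h r l) := by
  have : (1 - Q) ^ m ≠ 0 := pow_ne_zero _ (sub_ne_zero.2 hQ.symm)
  simp only [qE, eulerDenom, mul_div_assoc]
  field_simp

theorem one_sub_pow_mul_qS {P : ℝ} (hP0 : P ≠ 0) (hP1 : P ≠ 1) (h : ℤ) (r n i a : ℕ) :
    (1 - P) ^ i * qS P h r n i a =
      ∑ j : Fin r → Fin a, (-1 : ℝ) ^ (∑ l, (j l : ℕ)) *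
        P ^ (∑ l : Fin r, (h + n - (l : ℕ)) * (j l : ℤ)) *
          (P ^ (-∑ l, (j l : ℤ)) - 1) ^ i := by
  rw [qS, mul_sum]
  refine sum_congr rfl fun j _ => ?_
  have hexp : ∑ l : Fin r, (h + n - (l : ℕ) - i) * (j l : ℤ) =
      ∑ l : Fin r, (h + n - (l : ℕ)) * (j l : ℤ) + (-∑ l, (j l : ℤ)) * i := by
    rw [neg_mul, sum_mul, ← sum_neg_distrib, ← sum_add_distrib]
    exact sum_congr rfl fun l _ => by ring
  have hshift :
      P ^ (-∑ l, (j l : ℤ)) * (1 - P ^ (∑ l, (j l : ℕ))) =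
        P ^ (-∑ l, (j l : ℤ)) - 1 := by
    rw [mul_sub, mul_one, zpow_neg, ← Nat.cast_sum, zpow_natCast,
      inv_mul_cancel₀ (pow_ne_zero _ hP0)]
  rw [hexp, zpow_add₀ hP0, zpow_mul, zpow_natCast, ← hshift, mul_pow,
    ← one_sub_mul_qnat hP1, mul_pow]
  ring

theorem sum_signed_zpow_eq_eulerDenom_div {P : ℝ} (hP : 0 < P) (h : ℤ) (r k : ℕ) {a : ℕ}
    (ha : Odd a) :
    ∑ j : Fin r → Fin a,
        (-1 : ℝ) ^ (∑ l, (j l : ℕ)) * P ^ (∑ l : Fin r, (h + k - (l : ℕ)) * (j l : ℤ)) =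
      eulerDenom (P ^ a) h r k / eulerDenom P h r k := by
  have hterm : ∀ j : Fin r → Fin a,
      (-1 : ℝ) ^ (∑ l, (j l : ℕ)) * P ^ (∑ l : Fin r, (h + k - (l : ℕ)) * (j l : ℤ)) =
        ∏ l : Fin r, (-P ^ (h + k - (l : ℕ) : ℤ)) ^ (j l : ℕ) := by
    intro j
    rw [← prod_pow_eq_pow_sum, zpow_sum_of_ne_zero hP.ne', ← prod_mul_distrib]
    exact prod_congr rfl fun l _ => by rw [zpow_mul, zpow_natCast, ← mul_pow, neg_one_mul]
  rw [sum_congr rfl fun j _ => hterm j,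
    ← Fintype.prod_sum fun (l : Fin r) (v : Fin a) =>
      (-P ^ (h + k - (l : ℕ) : ℤ)) ^ (v : ℕ),
    eulerDenom_eq_prod_fin, eulerDenom_eq_prod_fin, ← prod_div_distrib]
  refine prod_congr rfl fun l _ => ?_
  have hpos : 0 < 1 + P ^ (h + k - (l : ℕ) : ℤ) := by positivity
  rw [Fin.sum_univ_eq_sum_range (fun v => (-P ^ (h + k - (l : ℕ) : ℤ)) ^ v),
    geom_sum_neg_of_odd hpos.ne' ha, ← zpow_natCast, ← zpow_mul, mul_comm, zpow_mul,
    zpow_natCast]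

theorem sum_choose_one_sub_pow_mul_qE_mul_qS {Q P : ℝ} (hQ : Q ≠ 1)
    (hP0 : 0 < P) (hP1 : P ≠ 1) (h : ℤ) (r n : ℕ) (y : ℝ) {a : ℕ} (ha : Odd a) :
    ∑ i ∈ range (n + 1), (n.choose i : ℝ) * ((1 - Q) ^ (n - i) * qE Q h r (n - i) y) *
        ((1 - P) ^ i * qS P h r n i a) =
      (1 + Q) ^ r * ∑ l ∈ range (n + 1),
        (n.choose l : ℝ) * ((-(Q ^ y)) ^ l / eulerDenom Q h r l) *
          (eulerDenom (P ^ a) h r l / eulerDenom P h r l) := by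
  set c : ℕ → ℝ := fun l => (-(Q ^ y)) ^ l / eulerDenom Q h r l
  set w : (Fin r → Fin a) → ℝ := fun j =>
    (-1 : ℝ) ^ (∑ l, (j l : ℕ)) * P ^ (∑ l : Fin r, (h + n - (l : ℕ)) * (j l : ℤ))
  set u : (Fin r → Fin a) → ℝ := fun j => P ^ (-∑ l, (j l : ℤ))
  have hweight : ∀ j, ∀ l ∈ range (n + 1), w j * u j ^ (n - l) =
      (-1 : ℝ) ^ (∑ l, (j l : ℕ)) *
        P ^ (∑ l' : Fin r, (h + l - (l' : ℕ)) * (j l' : ℤ)) := by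
    intro j l hl
    have hln : l ≤ n := Nat.lt_succ_iff.1 (mem_range.1 hl)
    rw [mul_assoc]
    congr 1
    rw [← zpow_natCast (u j), ← zpow_mul, ← zpow_add₀ hP0.ne', Nat.cast_sub hln]
    congr 1
    rw [neg_mul, sum_mul, ← sum_neg_distrib, ← sum_add_distrib]
    exact sum_congr rfl fun l' _ => by ring
  calc _ = (1 + Q) ^ r * ∑ j, w j * ∑ i ∈ range (n + 1), (n.choose i : ℝ) *
        (∑ l ∈ range (n - i + 1), ((n - i).choose l : ℝ) * c l) * (u j - 1) ^ i := by
        simp only [one_sub_pow_mul_qE hQ, one_sub_pow_mul_qS hP0.ne' hP1, mul_sum, sum_mul]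
        rw [sum_comm]
        exact sum_congr rfl fun j _ => sum_congr rfl fun i _ =>
          sum_congr rfl fun l _ => by ring
    _ = (1 + Q) ^ r * ∑ j, w j *
        ∑ l ∈ range (n + 1), (n.choose l : ℝ) * c l * u j ^ (n - l) := by
        simp only [sum_range_choose_mul_sum_range_choose_mul_pow, add_sub_cancel]
    _ = (1 + Q) ^ r * ∑ l ∈ range (n + 1),
        (n.choose l : ℝ) * c l * ∑ j, w j * u j ^ (n - l) := by
        congr 1
        simp only [mul_sum]
        rw [sum_comm]
        exact sum_congr rfl fun l _ => sum_congr rfl fun j _ => by ring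
    _ = _ := by
        refine congrArg _ (sum_congr rfl fun l hl => ?_)
        rw [sum_congr rfl fun j _ => hweight j l hl,
          sum_signed_zpow_eq_eulerDenom_div hP0 h r l ha]

theorem one_sub_pow_mul_qE_qS_sum {q : ℝ} (hq0 : 0 < q) (hq1 : q ≠ 1) (h : ℤ) (r n : ℕ)
    (x : ℝ) {a b : ℕ} (ha : Odd a) (hb : b ≠ 0) :
    (1 - q) ^ n * ∑ i ∈ range (n + 1), (n.choose i : ℝ) * (qnat q a) ^ (n - i) *
        (qnat q b) ^ i * qE (q ^ a) h r (n - i) ((b : ℝ) * x) * qS (q ^ b) h r n i a =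
      (1 + q ^ a) ^ r * ∑ l ∈ range (n + 1),
        (n.choose l : ℝ) * (-(q ^ (a * b)) ^ x) ^ l * eulerDenom (q ^ (a * b)) h r l /
          (eulerDenom (q ^ a) h r l * eulerDenom (q ^ b) h r l) := by
  have hpow_ne_one : ∀ {m : ℕ}, m ≠ 0 → q ^ m ≠ 1 := fun hm =>
    (pow_eq_one_iff_of_nonneg hq0.le hm).not.2 hq1
  calc _ = ∑ i ∈ range (n + 1), (n.choose i : ℝ) *
        ((1 - q ^ a) ^ (n - i) * qE (q ^ a) h r (n - i) ((b : ℝ) * x)) *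
        ((1 - q ^ b) ^ i * qS (q ^ b) h r n i a) := by
        rw [mul_sum]
        refine sum_congr rfl fun i hi => ?_
        rw [← one_sub_mul_qnat hq1, ← one_sub_mul_qnat hq1, mul_pow, mul_pow,
          ← pow_sub_mul_pow (1 - q) (Nat.lt_succ_iff.1 (mem_range.1 hi))]
        ring
    _ = (1 + q ^ a) ^ r * ∑ l ∈ range (n + 1), (n.choose l : ℝ) *
        ((-((q ^ a) ^ ((b : ℝ) * x))) ^ l / eulerDenom (q ^ a) h r l) *
        (eulerDenom ((q ^ b) ^ a) h r l / eulerDenom (q ^ b) h r l) :=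
      sum_choose_one_sub_pow_mul_qE_mul_qS (hpow_ne_one ha.pos.ne')
        (by positivity) (hpow_ne_one hb) h r n _ ha
    _ = _ := by
        rw [Real.rpow_natCast_mul (pow_nonneg hq0.le a) b x, pow_right_comm q b a,
          ← pow_mul q a b]
        exact congrArg _ (sum_congr rfl fun l _ => by ring)

theorem qE_qS_symmetry_general (q : ℝ) (hq0 : 0 < q) (hq1 : q < 1) (r : ℕ)
    (h : ℤ) (n : ℕ) (x : ℝ)
    (a b : ℕ) (haodd : Odd a) (hbodd : Odd b) :
    (1 + q ^ b) ^ r *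
        ∑ i ∈ Finset.range (n + 1),
          (n.choose i : ℝ) * (qnat q a) ^ (n - i) * (qnat q b) ^ i *
            qE (q ^ a) h r (n - i) ((b : ℝ) * x) * qS (q ^ b) h r n i a =
      (1 + q ^ a) ^ r *
        ∑ i ∈ Finset.range (n + 1),
          (n.choose i : ℝ) * (qnat q b) ^ (n - i) * (qnat q a) ^ i *
            qE (q ^ b) h r (n - i) ((a : ℝ) * x) * qS (q ^ a) h r n i b := by
  refine mul_left_cancel₀ (pow_ne_zero n (sub_ne_zero.2 hq1.ne')) ?_
  rw [mul_left_comm ((1 - q) ^ n), mul_left_comm ((1 - q) ^ n) ((1 + q ^ a) ^ r),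
    one_sub_pow_mul_qE_qS_sum hq0 hq1.ne h r n x haodd hbodd.pos.ne',
    one_sub_pow_mul_qE_qS_sum hq0 hq1.ne h r n x hbodd haodd.pos.ne',
    Nat.mul_comm b a, mul_left_comm ((1 + q ^ b) ^ r)]
  exact congrArg _ (congrArg _ (sum_congr rfl fun l _ => by ring))

theorem qE_qS_symmetry (q : ℝ) (hq0 : 0 < q) (hq1 : q < 1) (r : ℕ) (hr : 0 < r)
    (h : ℤ) (hhr : (r : ℤ) ≤ h) (n : ℕ) (x : ℝ)
    (a b : ℕ) (ha : 0 < a) (hb : 0 < b) (haodd : Odd a) (hbodd : Odd b) :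
    (1 + q ^ b) ^ r *
        ∑ i ∈ Finset.range (n + 1),
          (n.choose i : ℝ) * (qnat q a) ^ (n - i) * (qnat q b) ^ i *
            qE (q ^ a) h r (n - i) ((b : ℝ) * x) * qS (q ^ b) h r n i a =
      (1 + q ^ a) ^ r *
        ∑ i ∈ Finset.range (n + 1),
          (n.choose i : ℝ) * (qnat q b) ^ (n - i) * (qnat q a) ^ i *
            qE (q ^ b) h r (n - i) ((a : ℝ) * x) * qS (q ^ a) h r n i b :=
  qE_qS_symmetry_general q hq0 hq1 r h n x a b haodd hbodd
end

section
/- (Theorem 2.5) For all natural numbers m, n, real numbers x, y, 0 < q < 1, h ∈ ℤ, r ≥ 1: \sum_{k=0}^m \binom{m}{k} q^{(n+k)x} E_{n+k,q}^{(h,r)}(y) [x]_q^{m-k} = \sum_{k=0}^n \binom{n}{k} E_{m+k,q}^{(h,r)}(x+y) \, q^{(n-k)x} [-x]_q^{n-k}. -/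
/-!
Put `P_z = (1 - q)⁻¹ (1 - q^z X) ∈ ℝ[X]` and let `L` be the linear functional sending `X^l` to
`(1 + q)^r / ∏_{j<r} (1 + q^(h-r+l+1+j))`, so that `E_{N,q}^{(h,r)}(z) = L (P_z ^ N)`.
Since `q^x P_y + [x]_q = P_{x+y}` and `q^x [-x]_q = -[x]_q`, both sides of the identity are `L`
applied to `(q^x P_y)^n P_{x+y}^m`: the left side expands `P_{x+y}^m = (q^x P_y + [x]_q)^m`,
the right side expands `(q^x P_y)^n = (P_{x+y} - [x]_q)^n`.
-/

open Polynomial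

theorem sum_choose_mul_pow_add {R : Type*} [CommSemiring R] (a b : R) (m n : ℕ) :
    ∑ k ∈ Finset.range (m + 1), (m.choose k : R) * a ^ (n + k) * b ^ (m - k) =
      a ^ n * (a + b) ^ m := by
  rw [add_pow, Finset.mul_sum]
  refine Finset.sum_congr rfl fun k _ => ?_
  ring

theorem sum_choose_mul_pow_eq_of_add_eq {R : Type*} [CommRing R] {a b c : R} (hc : a + b = c)
    (m n : ℕ) :
    ∑ k ∈ Finset.range (m + 1), (m.choose k : R) * a ^ (n + k) * b ^ (m - k) =
      ∑ k ∈ Finset.range (n + 1), (n.choose k : R) * c ^ (m + k) * (-b) ^ (n - k) := by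
  have ha : c + -b = a := by rw [← hc]; ring
  rw [sum_choose_mul_pow_add, sum_choose_mul_pow_add, hc, ha, mul_comm]

theorem sum_choose_smul_pow_eq_of_smul_add_eq {R A : Type*} [CommRing R] [CommRing A]
    [Algebra R A] {α Z : R} {p s : A} (hs : α • p + algebraMap R A Z = s) (m n : ℕ) :
    ∑ k ∈ Finset.range (m + 1), ((m.choose k : R) * α ^ (n + k) * Z ^ (m - k)) • p ^ (n + k) =
      ∑ k ∈ Finset.range (n + 1), ((n.choose k : R) * (-Z) ^ (n - k)) • s ^ (m + k) := by
  convert sum_choose_mul_pow_eq_of_add_eq hs m n using 2 with k _ k _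
  · simp only [Algebra.smul_def, map_mul, map_pow, map_natCast, mul_pow]
    ring
  · simp only [Algebra.smul_def, map_mul, map_pow, map_natCast, map_neg]
    ring

theorem one_sub_C_mul_X_pow {R : Type*} [CommRing R] (w : R) (N : ℕ) :
    (1 - C w * X) ^ N =
      ∑ l ∈ Finset.range (N + 1), monomial l ((N.choose l : R) * (-w) ^ l) := by
  rw [sub_eq_add_neg, add_comm, ← neg_mul, ← C_neg, add_pow]
  refine Finset.sum_congr rfl fun l _ => ?_
  rw [one_pow, mul_one, mul_pow, ← C_pow, ← C_eq_natCast, mul_comm, ← mul_assoc, ← C_mul,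
    C_mul_X_pow_eq_monomial]

noncomputable def qEFunctional (q : ℝ) (h : ℤ) (r : ℕ) : ℝ[X] →ₗ[ℝ] ℝ :=
  lsum fun l =>
    ((1 + q) ^ r / ∏ j ∈ Finset.range r, (1 + q ^ (h - r + l + 1 + j))) • LinearMap.id

noncomputable def qEFactor (q z : ℝ) : ℝ[X] := C (1 - q)⁻¹ * (1 - C (q ^ z) * X)

theorem qEFunctional_monomial (q : ℝ) (h : ℤ) (r l : ℕ) (a : ℝ) :
    qEFunctional q h r (monomial l a) =
      (1 + q) ^ r / (∏ j ∈ Finset.range r, (1 + q ^ (h - r + l + 1 + j))) * a := by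
  rw [qEFunctional, lsum_apply, sum_monomial_index]
  · rfl
  · exact map_zero _

theorem qEFunctional_qEFactor_pow (q : ℝ) (h : ℤ) (r N : ℕ) (z : ℝ) :
    qEFunctional q h r (qEFactor q z ^ N) = qE q h r N z := by
  rw [qEFactor, mul_pow, ← C_pow, ← smul_eq_C_mul, map_smul, one_sub_C_mul_X_pow, map_sum, qE,
    Finset.smul_sum, Finset.mul_sum]
  refine Finset.sum_congr rfl fun l _ => ?_
  rw [qEFunctional_monomial, smul_eq_mul]
  ring

theorem qEFactor_add {q : ℝ} (hq : 0 < q) (x y : ℝ) :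
    q ^ x • qEFactor q y + C (qnum q x) = qEFactor q (x + y) := by
  rw [qEFactor, qEFactor, qnum, Real.rpow_add hq, smul_eq_C_mul, div_eq_mul_inv,
    C_mul, C_mul, map_sub, map_one]
  ring

theorem rpow_mul_qnum_neg {q : ℝ} (hq : 0 < q) (x : ℝ) : q ^ x * qnum q (-x) = -qnum q x := by
  have : q ^ x * q ^ (-x) = 1 := by rw [← Real.rpow_add hq, add_neg_cancel, Real.rpow_zero]
  rw [qnum, qnum, mul_div_assoc', mul_sub, this, mul_one, ← neg_div, neg_sub]

theorem qE_double_symmetry_general (q : ℝ) (hq0 : 0 < q) (h : ℤ) (r : ℕ)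
    (m n : ℕ) (x y : ℝ) :
    ∑ k ∈ Finset.range (m + 1),
        (m.choose k : ℝ) * q ^ (((n + k : ℕ) : ℝ) * x) * qE q h r (n + k) y *
          (qnum q x) ^ (m - k) =
      ∑ k ∈ Finset.range (n + 1),
        (n.choose k : ℝ) * qE q h r (m + k) (x + y) * q ^ (((n - k : ℕ) : ℝ) * x) *
          (qnum q (-x)) ^ (n - k) := by
  have key := congrArg (qEFunctional q h r)
    (sum_choose_smul_pow_eq_of_smul_add_eq (qEFactor_add hq0 x y) m n)
  simp only [map_sum, map_smul, qEFunctional_qEFactor_pow, smul_eq_mul] at key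
  have hpow (N : ℕ) : q ^ ((N : ℝ) * x) = (q ^ x) ^ N := by
    rw [mul_comm, Real.rpow_mul_natCast hq0.le]
  convert key using 2 with k _ k _
  · rw [hpow]
    ring
  · rw [hpow, ← rpow_mul_qnum_neg hq0, mul_pow]
    ring

theorem qE_double_symmetry (q : ℝ) (hq0 : 0 < q) (hq1 : q < 1) (h : ℤ) (r : ℕ) (hr : 0 < r)
    (m n : ℕ) (x y : ℝ) :
    ∑ k ∈ Finset.range (m + 1),
        (m.choose k : ℝ) * q ^ (((n + k : ℕ) : ℝ) * x) * qE q h r (n + k) y *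
          (qnum q x) ^ (m - k) =
      ∑ k ∈ Finset.range (n + 1),
        (n.choose k : ℝ) * qE q h r (m + k) (x + y) * q ^ (((n - k : ℕ) : ℝ) * x) *
          (qnum q (-x)) ^ (n - k) :=
  qE_double_symmetry_general q hq0 h r m n x y
end

section
/- (Distribution-type identity underlying Theorem 2.1, case r = 1) Let a, b be odd positive integers, 0 < q < 1, h ∈ ℤ with h ≥ 1, n ∈ ℕ, x > 0 real. Then [2]_{q^b} [a]_q^n \sum_{j=0}^{a-1} (-1)^j q^{bhj} E_{n,q^a}^{(h,1)}(bx + bj/a) = [2]_{q^a} [b]_q^n \sum_{j=0}^{b-1} (-1)^j q^{ahj} E_{n,q^b}^{(h,1)}(ax + aj/b). -/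
/-- The (h,q)-Euler polynomial of order 1, defined by the series
`E_{n,q}^{(h,1)}(x) = (1+q) ∑_{m=0}^∞ (-1)^m q^{hm} [m+x]_q^n`. -/
noncomputable def qE1 (q : ℝ) (h : ℤ) (n : ℕ) (x : ℝ) : ℝ :=
  (1 + q) * ∑' m : ℕ, (-1 : ℝ) ^ m * q ^ (h * m) * (qnum q ((m : ℝ) + x)) ^ n

lemma summable_term {q : ℝ} (hq0 : 0 < q) (hq1 : q < 1) (h : ℤ) (hh : 1 ≤ h) (n : ℕ)
    (y : ℝ) (hy : 0 ≤ y) :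
    Summable fun m : ℕ => (-1 : ℝ) ^ m * q ^ (h * m) * (qnum q ((m : ℝ) + y)) ^ n := by
  have h1q : (0:ℝ) < 1 - q := by linarith
  apply Summable.of_abs
  have hgeo : Summable fun m : ℕ => (1/(1-q))^n * q ^ m :=
    (summable_geometric_of_lt_one hq0.le hq1).mul_left _
  refine hgeo.of_nonneg_of_le (fun m => abs_nonneg _) (fun m => ?_)
  rw [abs_mul, abs_mul, abs_pow, abs_neg, abs_one, one_pow, one_mul, abs_pow]
  have h1 : |q ^ (h * m)| ≤ q ^ m := by
    rw [abs_of_pos (zpow_pos hq0 _)]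
    calc q ^ (h * (m:ℤ)) ≤ q ^ ((m:ℤ)) :=
          zpow_le_zpow_right_of_le_one₀ hq0 hq1.le (by nlinarith [Int.natCast_nonneg m])
      _ = q ^ m := zpow_natCast q m
  have h2 : |qnum q ((m:ℝ) + y)| ≤ 1/(1-q) := by
    unfold qnum
    rw [abs_div, abs_of_pos h1q]
    have ht0 : 0 < q ^ ((m:ℝ) + y) := Real.rpow_pos_of_pos hq0 _
    have ht1 : q ^ ((m:ℝ) + y) ≤ 1 := Real.rpow_le_one hq0.le hq1.le (by positivity)
    gcongr
    rw [abs_le]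
    constructor <;> linarith
  calc |q ^ (h * m)| * |qnum q ((m:ℝ) + y)| ^ n ≤ q ^ m * (1/(1-q))^n := by
        apply mul_le_mul h1 (pow_le_pow_left₀ (abs_nonneg _) h2 n) (by positivity) (by positivity)
    _ = (1/(1-q))^n * q ^ m := by ring

lemma qnat_mul_qnum {q : ℝ} (hq0 : 0 < q) (hq1 : q < 1) (a : ℕ) (ha : 0 < a) (z : ℝ) :
    qnat q a * qnum (q ^ a) z = qnum q ((a : ℝ) * z) := by
  have h1 : (1:ℝ) - q ≠ 0 := by nlinarith
  have hqa : q ^ a < 1 := pow_lt_one₀ hq0.le hq1 ha.ne'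
  have h2 : (1:ℝ) - q ^ a ≠ 0 := by nlinarith
  unfold qnat qnum
  rw [show ((q:ℝ) ^ a) ^ z = q ^ ((a:ℝ) * z) from by
    rw [Real.rpow_mul hq0.le, Real.rpow_natCast]]
  field_simp

lemma tsum_eq_sum_range {b : ℕ} (hb : 0 < b) (f : ℕ → ℝ) (hf : Summable f) :
    ∑' m : ℕ, f m = ∑ i ∈ Finset.range b, ∑' s : ℕ, f (s * b + i) := by
  haveI : NeZero b := ⟨hb.ne'⟩
  rw [← Equiv.tsum_eq (Nat.divModEquiv b).symm f]
  have hsum : Summable (fun p : ℕ × Fin b => f ((Nat.divModEquiv b).symm p)) :=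
    ((Nat.divModEquiv b).symm.summable_iff).mpr hf
  rw [Summable.tsum_prod' hsum (fun s => .of_finite)]
  have step1 : ∀ s : ℕ, (∑' i : Fin b, f ((Nat.divModEquiv b).symm (s, i)))
      = ∑ i ∈ Finset.range b, f (s * b + i) := by
    intro s
    rw [tsum_fintype]
    rw [← Fin.sum_univ_eq_sum_range (fun i => f (s * b + i)) b]
    simp [Nat.divModEquiv]
  rw [tsum_congr step1]
  rw [Summable.tsum_finsetSum]
  intro i hi
  apply hf.comp_injective
  intro s t hst
  simp only at hst
  exact Nat.eq_of_mul_eq_mul_right hb (by omega)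

lemma side_reduction {q : ℝ} (hq0 : 0 < q) (hq1 : q < 1) (h : ℤ) (hh : 1 ≤ h)
    (n : ℕ) (x : ℝ) (hx : 0 < x) (a b : ℕ) (ha : 0 < a) (hb : 0 < b) (hbodd : Odd b) :
    (1 + q ^ b) * (qnat q a) ^ n *
        ∑ j ∈ Finset.range a,
          (-1 : ℝ) ^ j * q ^ ((b : ℤ) * h * j) * qE1 (q ^ a) h n ((b : ℝ) * x + (b : ℝ) * j / a) =
    (1 + q ^ a) * (1 + q ^ b) *
        ∑ j ∈ Finset.range a, ∑ i ∈ Finset.range b, ∑' s : ℕ,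
          (-1 : ℝ) ^ (j + i + s) * q ^ (h * ((a : ℤ) * b * s + a * i + b * j)) *
            (qnum q ((a : ℝ) * b * x + (a : ℝ) * b * s + a * i + b * j)) ^ n := by
  have hq : (q : ℝ) ≠ 0 := hq0.ne'
  have hqa0 : 0 < q ^ a := pow_pos hq0 a
  have hqa1 : q ^ a < 1 := pow_lt_one₀ hq0.le hq1 ha.ne'
  rw [Finset.mul_sum, Finset.mul_sum]
  refine Finset.sum_congr rfl (fun j hj => ?_)
  -- the function after the change of variables inside the series
  set y : ℝ := (b : ℝ) * x + (b : ℝ) * j / a with hy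
  have hy0 : 0 ≤ y := by
    have : (0:ℝ) ≤ (b : ℝ) * j / a := by positivity
    have hbx : 0 < (b:ℝ) * x := by positivity
    rw [hy]; linarith
  set g : ℕ → ℝ := fun m => (-1 : ℝ) ^ m * (q ^ a) ^ (h * m) * (qnum (q ^ a) ((m : ℝ) + y)) ^ n
    with hg
  have hgsum : Summable g := summable_term hqa0 hqa1 h hh n y hy0
  set f : ℕ → ℝ := fun m =>
      (-1 : ℝ) ^ m * q ^ (h * ((a : ℤ) * m + b * j)) *
        (qnum q ((a : ℝ) * b * x + (a : ℝ) * m + b * j)) ^ n with hf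
  have claim1 : ∀ m : ℕ, (qnat q a) ^ n * q ^ ((b : ℤ) * h * j) * g m = f m := by
    intro m
    have e1 : (qnat q a * qnum (q ^ a) ((m : ℝ) + y)) ^ n
        = (qnum q ((a : ℝ) * b * x + (a : ℝ) * m + b * j)) ^ n := by
      rw [qnat_mul_qnum hq0 hq1 a ha]
      have haR : (a : ℝ) ≠ 0 := Nat.cast_ne_zero.mpr ha.ne'
      have harg : (a : ℝ) * ((m : ℝ) + y) = (a : ℝ) * b * x + (a : ℝ) * m + b * j := by
        rw [hy]; field_simp; ring
      rw [harg]
    have e2 : (q ^ a : ℝ) ^ (h * (m:ℤ)) = q ^ ((a : ℤ) * (h * m)) := by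
      rw [← zpow_natCast q a, ← zpow_mul]
    have e3 : q ^ ((b : ℤ) * h * j) * q ^ ((a : ℤ) * (h * (m:ℤ)))
        = q ^ (h * ((a : ℤ) * m + b * j)) := by
      rw [← zpow_add₀ hq]
      congr 1
      ring
    calc (qnat q a) ^ n * q ^ ((b : ℤ) * h * j) * g m
        = (-1:ℝ)^m * (q ^ ((b : ℤ) * h * j) * ((q ^ a : ℝ) ^ (h * (m:ℤ)))) *
            ((qnat q a * qnum (q ^ a) ((m : ℝ) + y)) ^ n) := by
          rw [hg, mul_pow]; ring
      _ = f m := by rw [e2, e3, e1, hf]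
  have hfsum : Summable f := by
    refine ((hgsum.mul_left ((qnat q a) ^ n * q ^ ((b : ℤ) * h * j))).congr (fun m => ?_))
    rw [← claim1 m]
  have step1 : (1 + q ^ b) * qnat q a ^ n *
      ((-1 : ℝ) ^ j * q ^ ((b : ℤ) * h * j) * qE1 (q ^ a) h n ((b : ℝ) * x + (b : ℝ) * j / a))
      = (1 + q ^ a) * (1 + q ^ b) * ((-1 : ℝ) ^ j * ∑' m, f m) := by
    rw [qE1]
    rw [show (∑' m : ℕ, (-1:ℝ) ^ m * (q ^ a) ^ (h * m) * (qnum (q ^ a) ((m : ℝ) + ((b : ℝ) * x + (b : ℝ) * j / a))) ^ n) = ∑' m, g m from tsum_congr (fun m => by rw [hg, hy])]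
    have : (∑' m, f m) = (qnat q a) ^ n * q ^ ((b : ℤ) * h * j) * ∑' m, g m := by
      rw [← tsum_mul_left]
      exact tsum_congr (fun m => (claim1 m).symm)
    rw [this]; ring
  rw [step1, tsum_eq_sum_range hb f hfsum]
  congr 1
  rw [Finset.mul_sum]
  refine Finset.sum_congr rfl (fun i hi => ?_)
  rw [← tsum_mul_left]
  refine tsum_congr (fun s => ?_)
  simp only [hf]
  have sgn : (-1 : ℝ) ^ (s * b + i) = (-1 : ℝ) ^ (s + i) := by
    obtain ⟨k, hk⟩ := hbodd
    have : s * b + i = 2 * (s * k) + (s + i) := by rw [hk]; ring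
    rw [this, pow_add, pow_mul, neg_one_sq, one_pow, one_mul]
  have e4 : h * ((a : ℤ) * ((s * b + i : ℕ) : ℤ) + b * j)
      = h * ((a : ℤ) * b * s + a * i + b * j) := by push_cast; ring
  have e5 : (a : ℝ) * b * x + (a : ℝ) * ((s * b + i : ℕ) : ℝ) + b * j
      = (a : ℝ) * b * x + (a : ℝ) * b * s + a * i + b * j := by push_cast; ring
  rw [sgn, e4, e5, pow_add, pow_add, pow_add]
  ring

theorem qE1_symmetry (q : ℝ) (hq0 : 0 < q) (hq1 : q < 1) (h : ℤ) (hh : 1 ≤ h)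
    (n : ℕ) (x : ℝ) (hx : 0 < x)
    (a b : ℕ) (ha : 0 < a) (hb : 0 < b) (haodd : Odd a) (hbodd : Odd b) :
    (1 + q ^ b) * (qnat q a) ^ n *
        ∑ j ∈ Finset.range a,
          (-1 : ℝ) ^ j * q ^ ((b : ℤ) * h * j) * qE1 (q ^ a) h n ((b : ℝ) * x + (b : ℝ) * j / a) =
      (1 + q ^ a) * (qnat q b) ^ n *
        ∑ j ∈ Finset.range b,
          (-1 : ℝ) ^ j * q ^ ((a : ℤ) * h * j) * qE1 (q ^ b) h n ((a : ℝ) * x + (a : ℝ) * j / b) := by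
  rw [side_reduction hq0 hq1 h hh n x hx a b ha hb hbodd,
      side_reduction hq0 hq1 h hh n x hx b a hb ha haodd]
  have key : (∑ j ∈ Finset.range a, ∑ i ∈ Finset.range b, ∑' s : ℕ,
          (-1 : ℝ) ^ (j + i + s) * q ^ (h * ((a : ℤ) * b * s + a * i + b * j)) *
            (qnum q ((a : ℝ) * b * x + (a : ℝ) * b * s + a * i + b * j)) ^ n)
      = ∑ j ∈ Finset.range b, ∑ i ∈ Finset.range a, ∑' s : ℕ,
          (-1 : ℝ) ^ (j + i + s) * q ^ (h * ((b : ℤ) * a * s + b * i + a * j)) *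
            (qnum q ((b : ℝ) * a * x + (b : ℝ) * a * s + b * i + a * j)) ^ n := by
    rw [Finset.sum_comm]
    refine Finset.sum_congr rfl fun u hu => Finset.sum_congr rfl fun v hv => tsum_congr fun s => ?_
    have s1 : v + u + s = u + v + s := by omega
    have s2 : h * ((a : ℤ) * b * s + a * u + b * v) = h * ((b : ℤ) * a * s + b * v + a * u) := by
      ring
    have s3 : (a : ℝ) * b * x + (a : ℝ) * b * s + (a : ℝ) * u + (b : ℝ) * v
        = (b : ℝ) * a * x + (b : ℝ) * a * s + (b : ℝ) * v + (a : ℝ) * u := by ring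
    rw [s1, s2, s3]
  rw [key]; ring
end
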